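/- arXiv:1202.2410 — 7 statements merged into one kernel-verified Lean document; each statement's English description precedes it below -/
import Mathlib

section
/- Let 1 ≤ i < j ≤ n, let c′ be the (i,j)-interchange of c, and set δ = c_j − c_i. Then f(c′) − f(c) = (2(j−i)δ/n)·( μ_{ij}(S) − S̄ + (δ/2)·(1 − (j−i)/n) ), where S̄ = (1/n) Σ_{k=1}^n s_k. -/
open Finset

/-- Partial sums of the sequence `c` (1-indexed): `partSum c k = c 1 + ⋯ + c k`. -/
noncomputable def partSum (c : ℕ → ℝ) (k : ℕ) : ℝ := ∑ i ∈ Finset.Icc 1 k, c i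

/-- The mean `S̄` of the partial sums `s_1, …, s_n`. -/
noncomputable def meanPS (n : ℕ) (c : ℕ → ℝ) : ℝ :=
  (1 / (n : ℝ)) * ∑ k ∈ Finset.Icc 1 n, partSum c k

/-- The variance `f(c)` of the partial sums `s_1, …, s_n`. -/
noncomputable def varPS (n : ℕ) (c : ℕ → ℝ) : ℝ :=
  (1 / (n : ℝ)) * ∑ k ∈ Finset.Icc 1 n, (partSum c k - meanPS n c) ^ 2

/-- The `(i,j)`-partial mean `μ_{ij}(S) = (1/(j-i)) ∑_{k=i}^{j-1} s_k`. -/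
noncomputable def partMean (c : ℕ → ℝ) (i j : ℕ) : ℝ :=
  (1 / ((j : ℝ) - (i : ℝ))) * ∑ k ∈ Finset.Icc i (j - 1), partSum c k

/-- The `(i,j)`-interchange of `c`: swap the entries in positions `i` and `j`. -/
noncomputable def swapSeq (c : ℕ → ℝ) (i j : ℕ) : ℕ → ℝ := fun k => c (Equiv.swap i j k)

/-- `c` is an arrangement (permutation) of `a` on the index range `1..n`. -/
def IsArrangement (n : ℕ) (a c : ℕ → ℝ) : Prop :=
  ∃ σ : ℕ → ℕ, Set.BijOn σ (Set.Icc 1 n) (Set.Icc 1 n) ∧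
    ∀ k ∈ Set.Icc 1 n, c k = a (σ k)

/-- The dual sequence `c^d = (c_1, c_n, c_{n-1}, …, c_2)`. -/
noncomputable def dualSeq (n : ℕ) (c : ℕ → ℝ) : ℕ → ℝ :=
  fun k => if 2 ≤ k then c (n + 2 - k) else c k

lemma partSum_swap (c : ℕ → ℝ) (i j : ℕ) (hi : 1 ≤ i) (hij : i < j) (k : ℕ) :
    partSum (swapSeq c i j) k = partSum c k + (if i ≤ k ∧ k < j then c j - c i else 0) := by
  unfold partSum swapSeq
  by_cases hk1 : k < i
  · rw [if_neg (by omega)]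
    rw [add_zero]
    apply Finset.sum_congr rfl
    intro l hl
    simp only [Finset.mem_Icc] at hl
    rw [Equiv.swap_apply_of_ne_of_ne (by omega) (by omega)]
  · by_cases hk2 : k < j
    · rw [if_pos ⟨by omega, hk2⟩]
      have hik : i ∈ Finset.Icc 1 k := by simp [Finset.mem_Icc]; omega
      rw [← Finset.add_sum_erase _ _ hik, ← Finset.add_sum_erase _ (c ·) hik]
      have : ∑ l ∈ (Finset.Icc 1 k).erase i, c (Equiv.swap i j l)
          = ∑ l ∈ (Finset.Icc 1 k).erase i, c l := by
        apply Finset.sum_congr rfl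
        intro l hl
        simp only [Finset.mem_erase, Finset.mem_Icc] at hl
        rw [Equiv.swap_apply_of_ne_of_ne hl.1 (by omega)]
      rw [this, Equiv.swap_apply_left]
      ring
    · rw [if_neg (by omega), add_zero]
      apply Finset.sum_equiv (Equiv.swap i j)
      · intro l
        simp only [Finset.mem_Icc]
        rcases eq_or_ne l i with rfl | hli
        · rw [Equiv.swap_apply_left]; omega
        · rcases eq_or_ne l j with rfl | hlj
          · rw [Equiv.swap_apply_right]; omega
          · rw [Equiv.swap_apply_of_ne_of_ne hli hlj]
      · intro l _; rfl

lemma varPS_eq (n : ℕ) (hn : 1 ≤ n) (c : ℕ → ℝ) :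
    varPS n c = (1 / (n : ℝ)) * (∑ k ∈ Finset.Icc 1 n, (partSum c k) ^ 2)
      - (meanPS n c) ^ 2 := by
  have hn0 : (n : ℝ) ≠ 0 := by positivity
  have hS : ∑ k ∈ Finset.Icc 1 n, partSum c k = n * meanPS n c := by
    unfold meanPS; field_simp
  unfold varPS
  have : ∀ k, (partSum c k - meanPS n c) ^ 2
      = (partSum c k) ^ 2 - 2 * meanPS n c * partSum c k + (meanPS n c) ^ 2 := by
    intro k; ring
  simp only [this, Finset.sum_add_distrib, Finset.sum_sub_distrib, ← Finset.mul_sum, hS,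
    Finset.sum_const, Nat.card_Icc, nsmul_eq_mul]
  have : (n + 1 - 1 : ℕ) = n := by omega
  rw [this]
  field_simp
  ring

/-- the change of the objective under an (i,j)-interchange. -/
theorem varPS_swap_diff (n : ℕ) (hn : 1 ≤ n) (c : ℕ → ℝ) (i j : ℕ)
    (hi : 1 ≤ i) (hij : i < j) (hj : j ≤ n) :
    varPS n (swapSeq c i j) - varPS n c =
      2 * ((j : ℝ) - (i : ℝ)) * (c j - c i) / (n : ℝ) *
        (partMean c i j - meanPS n c
          + (c j - c i) / 2 * (1 - ((j : ℝ) - (i : ℝ)) / (n : ℝ))) := by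
  have hn0 : (n : ℝ) ≠ 0 := by positivity
  set δ := c j - c i with hδ
  set m : ℝ := (j : ℝ) - (i : ℝ) with hm
  have hm0 : m ≠ 0 := by
    have : (i : ℝ) < (j : ℝ) := by exact_mod_cast hij
    simp [hm]; linarith
  have hfilter : (Finset.Icc 1 n).filter (fun k => i ≤ k ∧ k < j) = Finset.Icc i (j - 1) := by
    ext k; simp only [Finset.mem_filter, Finset.mem_Icc]; omega
  have hcard : ((Finset.Icc i (j - 1)).card : ℝ) = m := by
    rw [Nat.card_Icc]
    have : (j - 1 + 1 - i : ℕ) = j - i := by omega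
    rw [this, hm]
    push_cast [le_of_lt hij]
    ring
  have hsplit : ∀ g : ℕ → ℝ,
      ∑ k ∈ Finset.Icc 1 n, (if i ≤ k ∧ k < j then g k else 0)
        = ∑ k ∈ Finset.Icc i (j - 1), g k := by
    intro g
    rw [← Finset.sum_filter, hfilter]
  have hμ : ∑ k ∈ Finset.Icc i (j - 1), partSum c k = m * partMean c i j := by
    unfold partMean
    rw [← hm]
    field_simp
  have h1 : ∑ k ∈ Finset.Icc 1 n, partSum (swapSeq c i j) k
      = (∑ k ∈ Finset.Icc 1 n, partSum c k) + m * δ := by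
    simp only [partSum_swap c i j hi hij, Finset.sum_add_distrib, hsplit]
    rw [Finset.sum_const, nsmul_eq_mul, hcard, hδ]
  have h2 : ∑ k ∈ Finset.Icc 1 n, (partSum (swapSeq c i j) k) ^ 2
      = (∑ k ∈ Finset.Icc 1 n, (partSum c k) ^ 2)
        + (2 * δ * (m * partMean c i j) + m * δ ^ 2) := by
    have key : ∀ k, (partSum (swapSeq c i j) k) ^ 2
        = (partSum c k) ^ 2 + (if i ≤ k ∧ k < j then 2 * δ * partSum c k + δ ^ 2 else 0) := by
      intro k
      rw [partSum_swap c i j hi hij]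
      split_ifs <;> simp [hδ] <;> ring
    simp only [key, Finset.sum_add_distrib, hsplit]
    rw [← Finset.mul_sum, hμ, Finset.sum_const, nsmul_eq_mul, hcard]
  have hM : meanPS n (swapSeq c i j) = meanPS n c + m * δ / n := by
    unfold meanPS
    rw [h1]
    field_simp
  rw [varPS_eq n hn (swapSeq c i j), varPS_eq n hn c, h2, hM]
  field_simp
  ring
end

section
/- Let 1 ≤ i < j ≤ n, let c′ be the (i,j)-interchange of c, set δ = c_j − c_i, D₁ = ((j−i)/n)·(1 − (j−i)/n) and D₂ = (2(j−i)/n)·(μ_{ij}(S) − S̄). If D₂ > 0 (equivalently μ_{ij}(S) > S̄) and either δ > 0 or δ < −D₂/D₁, then f(c′) > f(c), i.e. the (i,j)-interchange is favorable. -/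
open Finset

lemma sum_sq_expand (S : Finset ℕ) (f : ℕ → ℝ) (a : ℝ) :
    ∑ k ∈ S, (f k - a)^2
      = ∑ k ∈ S, (f k)^2 - 2*a*(∑ k ∈ S, f k) + S.card * a^2 := by
  have : ∀ k ∈ S, (f k - a)^2 = (f k)^2 - 2*a*(f k) + a^2 := fun k _ => by ring
  rw [Finset.sum_congr rfl this, Finset.sum_add_distrib, Finset.sum_sub_distrib,
    Finset.sum_const, ← Finset.mul_sum]
  simp [nsmul_eq_mul]

set_option maxHeartbeats 1000000 in
/-- Claim 1: criterion for a favorable (i,j)-interchange when D₂ > 0. -/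
theorem swap_favorable_of_D2_pos (n : ℕ) (hn : 1 ≤ n) (c : ℕ → ℝ) (i j : ℕ)
    (hi : 1 ≤ i) (hij : i < j) (hj : j ≤ n)
    (hD2 : 0 < 2 * ((j : ℝ) - (i : ℝ)) / (n : ℝ) * (partMean c i j - meanPS n c))
    (hδ : 0 < c j - c i ∨
      c j - c i <
        -(2 * ((j : ℝ) - (i : ℝ)) / (n : ℝ) * (partMean c i j - meanPS n c)) /
          ((((j : ℝ) - (i : ℝ)) / (n : ℝ)) * (1 - ((j : ℝ) - (i : ℝ)) / (n : ℝ)))) :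
    varPS n c < varPS n (swapSeq c i j) := by
  have hn0 : (0:ℝ) < n := by exact_mod_cast hn
  have hnne : (n:ℝ) ≠ 0 := ne_of_gt hn0
  set δ : ℝ := c j - c i with hδdef
  set m : ℝ := (j:ℝ) - (i:ℝ) with hmdef
  have him : (1:ℝ) ≤ i := by exact_mod_cast hi
  have hjm : (j:ℝ) ≤ n := by exact_mod_cast hj
  have hijm : (i:ℝ) < j := by exact_mod_cast hij
  have hm0 : 0 < m := by rw [hmdef]; linarith
  have hmne : m ≠ 0 := ne_of_gt hm0
  have hmn : m < n := by rw [hmdef]; linarith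
  -- index set facts
  have hIcc : Finset.Icc i (j-1) = Finset.Ico i j := by
    ext k; simp only [Finset.mem_Icc, Finset.mem_Ico]; omega
  have hfilt : (Finset.Icc 1 n).filter (fun k => i ≤ k ∧ k < j) = Finset.Ico i j := by
    ext k; simp only [Finset.mem_filter, Finset.mem_Icc, Finset.mem_Ico]; omega
  have hcard : ((Finset.Ico i j).card : ℝ) = m := by
    rw [Nat.card_Ico, hmdef, Nat.cast_sub hij.le]
  have hcardn : ((Finset.Icc 1 n).card : ℝ) = n := by
    rw [Nat.card_Icc]; push_cast; ring
  set s : ℕ → ℝ := partSum c with hsdef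
  set A : ℝ := ∑ k ∈ Finset.Icc 1 n, s k with hA
  set A' : ℝ := ∑ k ∈ Finset.Ico i j, s k with hA'
  set B : ℝ := ∑ k ∈ Finset.Icc 1 n, (s k)^2 with hB
  have hSb : meanPS n c = (1/(n:ℝ)) * A := rfl
  have hμ : partMean c i j = (1/m) * A' := by rw [partMean, hIcc, hmdef, hA']
  -- partial sums of the swapped sequence
  have hps : ∀ k, partSum (swapSeq c i j) k = s k + (if i ≤ k ∧ k < j then δ else 0) :=
    fun k => partSum_swap c i j hi hij k
  have hEsum : ∑ k ∈ Finset.Icc 1 n, (if i ≤ k ∧ k < j then δ else 0) = m * δ := by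
    rw [← Finset.sum_filter, hfilt, Finset.sum_const, nsmul_eq_mul, hcard]
  have hmean' : meanPS n (swapSeq c i j) = (1/(n:ℝ)) * A + m*δ/n := by
    rw [meanPS, Finset.sum_congr rfl (fun k _ => hps k), Finset.sum_add_distrib, hEsum, ← hA]
    ring
  set C : ℝ := (1/(n:ℝ)) * A + m*δ/n with hC
  -- variance of swapped sequence
  have hsummand : ∀ k ∈ Finset.Icc 1 n,
      (partSum (swapSeq c i j) k - meanPS n (swapSeq c i j))^2
        = (s k - C)^2 + (if i ≤ k ∧ k < j then 2*δ*(s k - C) + δ^2 else 0) := by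
    intro k _
    rw [hps k, hmean']
    split_ifs <;> ring
  have hsum2 : ∑ k ∈ Finset.Icc 1 n, (if i ≤ k ∧ k < j then 2*δ*(s k - C) + δ^2 else 0)
      = 2*δ*(A' - m*C) + m*δ^2 := by
    rw [← Finset.sum_filter, hfilt, Finset.sum_add_distrib, ← Finset.mul_sum,
      Finset.sum_sub_distrib, Finset.sum_const, Finset.sum_const, nsmul_eq_mul, nsmul_eq_mul,
      hcard, ← hA']
  have hvar' : varPS n (swapSeq c i j)
      = (1/(n:ℝ)) * ((B - 2*C*A + (n:ℝ)*C^2) + (2*δ*(A' - m*C) + m*δ^2)) := by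
    rw [varPS, Finset.sum_congr rfl hsummand, Finset.sum_add_distrib, hsum2,
      sum_sq_expand, hcardn]
  have hvar : varPS n c = (1/(n:ℝ)) * (B - 2*((1/(n:ℝ))*A)*A + (n:ℝ)*((1/(n:ℝ))*A)^2) := by
    rw [varPS, hSb, sum_sq_expand, hcardn]
  have key : varPS n (swapSeq c i j) - varPS n c
      = (m/(n:ℝ)*(1-m/(n:ℝ)))*δ^2 + (2*m/(n:ℝ)*(1/m*A' - 1/(n:ℝ)*A))*δ := by
    rw [hvar', hvar, hC]; field_simp; ring
  rw [← hμ, ← hSb] at key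
  have hD1 : 0 < m/(n:ℝ)*(1-m/(n:ℝ)) := by
    have h1 : 0 < m/(n:ℝ) := div_pos hm0 hn0
    have h2 : m/(n:ℝ) < 1 := (div_lt_one hn0).mpr hmn
    nlinarith
  rcases hδ with h | h
  · have h1 := mul_pos hD2 h
    have h2 := mul_pos hD1 (pow_pos h 2)
    linarith [key, h1, h2]
  · have hq : -(2 * m / (n:ℝ) * (partMean c i j - meanPS n c)) /
        (m / (n:ℝ) * (1 - m / (n:ℝ))) < 0 :=
      div_neg_of_neg_of_pos (by linarith) hD1
    have hdneg : δ < 0 := lt_trans h hq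
    have hlt : δ * (m/(n:ℝ)*(1-m/(n:ℝ)))
        < -(2 * m / (n:ℝ) * (partMean c i j - meanPS n c)) := (lt_div_iff₀ hD1).mp h
    have hfac : 0 < δ * ((m/(n:ℝ)*(1-m/(n:ℝ)))*δ
        + 2 * m / (n:ℝ) * (partMean c i j - meanPS n c)) :=
      mul_pos_of_neg_of_neg hdneg (by linarith [hlt])
    have hre : δ * ((m/(n:ℝ)*(1-m/(n:ℝ)))*δ
        + 2 * m / (n:ℝ) * (partMean c i j - meanPS n c))
      = (m/(n:ℝ)*(1-m/(n:ℝ)))*δ^2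
        + (2*m/(n:ℝ)*(partMean c i j - meanPS n c))*δ := by ring
    linarith [key, hfac, hre]
end

section
/- Let 1 ≤ i < j ≤ n, let c′ be the (i,j)-interchange of c, set δ = c_j − c_i, D₁ = ((j−i)/n)·(1 − (j−i)/n) and D₂ = (2(j−i)/n)·(μ_{ij}(S) − S̄). If D₂ ≤ 0 (equivalently μ_{ij}(S) ≤ S̄) and either δ < 0 or δ > −D₂/D₁, then f(c′) > f(c), i.e. the (i,j)-interchange is favorable. -/
open Finset

/-!
Interchanging `c_i` and `c_j` adds `δ = c_j - c_i` to exactly the partial sums `s_k` with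
`i ≤ k < j`, so `f(c') = f(c) + D₂ δ + D₁ δ²`. This quadratic in `δ` has leading coefficient
`D₁ > 0` and roots `0` and `-D₂/D₁ ≥ 0`, so it exceeds `f(c)` outside the segment between them.
-/

lemma Finset.variance_eq_mean_sq_sub_sq_mean {ι : Type*} (s : Finset ι) (x : ι → ℝ) :
    (1 / (#s : ℝ)) * ∑ k ∈ s, (x k - (1 / (#s : ℝ)) * ∑ l ∈ s, x l) ^ 2
      = (1 / (#s : ℝ)) * ∑ k ∈ s, x k ^ 2 - ((1 / (#s : ℝ)) * ∑ k ∈ s, x k) ^ 2 := by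
  rcases s.eq_empty_or_nonempty with rfl | hs
  · simp
  have hcard : (#s : ℝ) ≠ 0 := by positivity
  simp only [sub_sq, sum_add_distrib, sum_sub_distrib, sum_const, nsmul_eq_mul, ← sum_mul,
    ← mul_sum]
  field_simp
  ring

lemma varPS_eq_mean_sq_sub_sq_meanPS (n : ℕ) (c : ℕ → ℝ) :
    varPS n c = (1 / (n : ℝ)) * ∑ k ∈ Icc 1 n, partSum c k ^ 2 - meanPS n c ^ 2 := by
  have h := Finset.variance_eq_mean_sq_sub_sq_mean (Icc 1 n) (partSum c)
  rwa [Nat.card_Icc, Nat.add_sub_cancel] at h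

lemma swapSeq_apply (c : ℕ → ℝ) {i j : ℕ} (hij : i ≠ j) (t : ℕ) :
    swapSeq c i j t
      = c t + ((if t = i then c j - c i else 0) + (if t = j then c i - c j else 0)) := by
  unfold swapSeq
  rcases eq_or_ne t i with rfl | hti
  · simp [hij]
  rcases eq_or_ne t j with rfl | htj
  · simp [hij.symm]
  · simp [Equiv.swap_apply_of_ne_of_ne hti htj, hti, htj]

lemma partSum_swapSeq (c : ℕ → ℝ) {i j : ℕ} (hi : 1 ≤ i) (hij : i < j) (k : ℕ) :
    partSum (swapSeq c i j) k
      = partSum c k + if k ∈ Icc i (j - 1) then c j - c i else 0 := by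
  simp only [partSum, swapSeq_apply c hij.ne, sum_add_distrib, sum_ite_eq', mem_Icc]
  split_ifs <;> first | ring1 | (exfalso; omega)

lemma cast_card_Icc_pred {i j : ℕ} (hij : i < j) :
    ((#(Icc i (j - 1)) : ℕ) : ℝ) = (j : ℝ) - i := by
  rw [Nat.card_Icc, show j - 1 + 1 - i = j - i by omega, Nat.cast_sub hij.le]

section Interchange

variable (c : ℕ → ℝ) {n i j : ℕ}

lemma sum_Icc_ite_mem_Icc_pred (hi : 1 ≤ i) (hj : j ≤ n) (f : ℕ → ℝ) :
    ∑ k ∈ Icc 1 n, (if k ∈ Icc i (j - 1) then f k else 0) = ∑ k ∈ Icc i (j - 1), f k := by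
  rw [sum_ite_mem, inter_eq_right.mpr (Icc_subset_Icc hi (by omega))]

lemma sum_partSum_swapSeq (hi : 1 ≤ i) (hij : i < j) (hj : j ≤ n) :
    ∑ k ∈ Icc 1 n, partSum (swapSeq c i j) k
      = ∑ k ∈ Icc 1 n, partSum c k + ((j : ℝ) - i) * (c j - c i) := by
  simp only [partSum_swapSeq c hi hij, sum_add_distrib, sum_Icc_ite_mem_Icc_pred hi hj,
    sum_const, nsmul_eq_mul, cast_card_Icc_pred hij]

lemma sum_partSum_swapSeq_sq (hi : 1 ≤ i) (hij : i < j) (hj : j ≤ n) :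
    ∑ k ∈ Icc 1 n, partSum (swapSeq c i j) k ^ 2
      = ∑ k ∈ Icc 1 n, partSum c k ^ 2 + 2 * (c j - c i) * ∑ k ∈ Icc i (j - 1), partSum c k
        + ((j : ℝ) - i) * (c j - c i) ^ 2 := by
  have hsq (k : ℕ) : partSum (swapSeq c i j) k ^ 2 = partSum c k ^ 2
      + if k ∈ Icc i (j - 1) then 2 * (c j - c i) * partSum c k + (c j - c i) ^ 2 else 0 := by
    rw [partSum_swapSeq c hi hij]
    split_ifs <;> ring
  simp only [hsq, sum_add_distrib, sum_Icc_ite_mem_Icc_pred hi hj, sum_const, nsmul_eq_mul,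
    cast_card_Icc_pred hij, ← mul_sum]
  ring

lemma varPS_swapSeq (hi : 1 ≤ i) (hij : i < j) (hj : j ≤ n) :
    varPS n (swapSeq c i j) = varPS n c
      + 2 * ((j : ℝ) - i) / n * (partMean c i j - meanPS n c) * (c j - c i)
      + ((j : ℝ) - i) / n * (1 - ((j : ℝ) - i) / n) * (c j - c i) ^ 2 := by
  have hn : (n : ℝ) ≠ 0 := by norm_cast; omega
  have hji : (j : ℝ) - i ≠ 0 := sub_ne_zero.mpr (by exact_mod_cast hij.ne')
  simp only [varPS_eq_mean_sq_sub_sq_meanPS, meanPS, partMean, sum_partSum_swapSeq c hi hij hj,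
    sum_partSum_swapSeq_sq c hi hij hj]
  field_simp
  ring

end Interchange

lemma mul_add_mul_sq_pos {D₁ D₂ δ : ℝ} (hD₁ : 0 < D₁) (hD₂ : D₂ ≤ 0)
    (hδ : δ < 0 ∨ -D₂ / D₁ < δ) : 0 < D₂ * δ + D₁ * δ ^ 2 := by
  rcases hδ with hδ | hδ
  · nlinarith [mul_nonneg_of_nonpos_of_nonpos hD₂ hδ.le,
      mul_pos hD₁ (mul_pos_of_neg_of_neg hδ hδ)]
  · rw [div_lt_iff₀ hD₁] at hδ
    have hδpos : 0 < δ := by nlinarith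
    nlinarith [mul_pos hδpos (by linarith : 0 < D₂ + δ * D₁)]

theorem swap_favorable_of_D2_nonpos_general (n : ℕ) (c : ℕ → ℝ) (i j : ℕ)
    (hi : 1 ≤ i) (hij : i < j) (hj : j ≤ n)
    (hD2 : 2 * ((j : ℝ) - (i : ℝ)) / (n : ℝ) * (partMean c i j - meanPS n c) ≤ 0)
    (hδ : c j - c i < 0 ∨
      -(2 * ((j : ℝ) - (i : ℝ)) / (n : ℝ) * (partMean c i j - meanPS n c)) /
          ((((j : ℝ) - (i : ℝ)) / (n : ℝ)) * (1 - ((j : ℝ) - (i : ℝ)) / (n : ℝ)))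
        < c j - c i) :
    varPS n c < varPS n (swapSeq c i j) := by
  have hn : (0 : ℝ) < n := by exact_mod_cast (by omega : 0 < n)
  have hji : (0 : ℝ) < (j : ℝ) - i := sub_pos.mpr (by exact_mod_cast hij)
  have hjin : (j : ℝ) - i < n := by
    rw [← Nat.cast_sub hij.le]
    exact_mod_cast (by omega : j - i < n)
  have hD1 : 0 < ((j : ℝ) - i) / n * (1 - ((j : ℝ) - i) / n) :=
    mul_pos (div_pos hji hn) (sub_pos.mpr ((div_lt_one hn).mpr hjin))
  rw [varPS_swapSeq c hi hij hj]
  linarith [mul_add_mul_sq_pos hD1 hD2 hδ]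

/-- Claim 2: criterion for a favorable (i,j)-interchange when D₂ ≤ 0. -/
theorem swap_favorable_of_D2_nonpos (n : ℕ) (hn : 1 ≤ n) (c : ℕ → ℝ) (i j : ℕ)
    (hi : 1 ≤ i) (hij : i < j) (hj : j ≤ n)
    (hD2 : 2 * ((j : ℝ) - (i : ℝ)) / (n : ℝ) * (partMean c i j - meanPS n c) ≤ 0)
    (hδ : c j - c i < 0 ∨
      -(2 * ((j : ℝ) - (i : ℝ)) / (n : ℝ) * (partMean c i j - meanPS n c)) /
          ((((j : ℝ) - (i : ℝ)) / (n : ℝ)) * (1 - ((j : ℝ) - (i : ℝ)) / (n : ℝ)))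
        < c j - c i) :
    varPS n c < varPS n (swapSeq c i j) :=
  swap_favorable_of_D2_nonpos_general n c i j hi hij hj hD2 hδ
end

section
/- (Proposition 1) If c is an optimal arrangement of A, then c_1 = a_1, the smallest element of A. Equivalently, any arrangement c with c_1 ≠ a_1 is not optimal. -/
open Finset

/-! Twice `n²` times the variance of the partial sums is `∑_{k,l} (s_k - s_l)²`. If `c_1 ≠ a_1`,
say `a_1 = c_j` with `j > 1`, swapping `c_1` and `c_j` lowers `s_1, …, s_{j-1}` by `c_1 - a_1 > 0`
and leaves `s_j, …, s_n` unchanged. The terms being positive, `s_k ≤ s_l` whenever `k < j ≤ l`, so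
every such gap `s_l - s_k` strictly widens while all other gaps stay the same: the swap strictly
increases the variance. -/

theorem Finset.sum_sum_sub_sq {ι R : Type*} [CommRing R] (s : Finset ι) (g : ι → R) :
    ∑ i ∈ s, ∑ j ∈ s, (g i - g j) ^ 2 = 2 * (#s * ∑ i ∈ s, g i ^ 2 - (∑ i ∈ s, g i) ^ 2) := by
  simp only [sub_sq, sum_add_distrib, sum_sub_distrib, sum_const, nsmul_eq_mul, ← mul_sum,
    ← sum_mul]
  ring

theorem varPS_eq_sum_sum_sub_sq (n : ℕ) (c : ℕ → ℝ) :
    varPS n c = (∑ k ∈ Icc 1 n, ∑ l ∈ Icc 1 n, (partSum c k - partSum c l) ^ 2) / (2 * n ^ 2) := by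
  rcases Nat.eq_zero_or_pos n with rfl | hn
  · simp [varPS]
  have hcard : #(Icc 1 n) = n := by simp
  have hcentred : ∑ k ∈ Icc 1 n, (partSum c k - meanPS n c) = 0 := by
    rw [sum_sub_distrib, sum_const, hcard, nsmul_eq_mul, meanPS]
    field_simp
    ring
  have hshift : ∀ k l, partSum c k - partSum c l =
      (partSum c k - meanPS n c) - (partSum c l - meanPS n c) := fun k l => by ring
  simp_rw [hshift]
  rw [Finset.sum_sum_sub_sq, hcentred, hcard, varPS]
  field_simp
  ring

theorem partSum_swapSeq_of_lt (c : ℕ → ℝ) {i j k : ℕ} (hi : i ∈ Icc 1 k) (hkj : k < j) :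
    partSum (swapSeq c i j) k = partSum c k + (c j - c i) := by
  unfold partSum swapSeq
  rw [← add_sum_erase _ _ hi, ← add_sum_erase _ _ hi, Equiv.swap_apply_left]
  have hrest : ∑ m ∈ (Icc 1 k).erase i, c (Equiv.swap i j m) = ∑ m ∈ (Icc 1 k).erase i, c m :=
    sum_congr rfl fun m hm => by
      rw [mem_erase, mem_Icc] at hm
      rw [Equiv.swap_apply_of_ne_of_ne hm.1 (by omega)]
  rw [hrest]
  ring

theorem partSum_swapSeq_of_le (c : ℕ → ℝ) {i j k : ℕ} (hi : 1 ≤ i) (hij : i ≤ j) (hjk : j ≤ k) :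
    partSum (swapSeq c i j) k = partSum c k := by
  refine Equiv.Perm.sum_comp _ _ _ fun m hm => ?_
  have : m = i ∨ m = j := by
    by_contra! h
    exact hm (Equiv.swap_apply_of_ne_of_ne h.1 h.2)
  simp only [coe_Icc, Set.mem_Icc]
  omega

theorem partSum_le_partSum {n : ℕ} {c : ℕ → ℝ} (hc : ∀ i ∈ Icc 1 n, 0 ≤ c i) {k l : ℕ}
    (hkl : k ≤ l) (hln : l ≤ n) : partSum c k ≤ partSum c l :=
  sum_le_sum_of_subset_of_nonneg (Icc_subset_Icc le_rfl hkl) fun i hi _ =>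
    hc i (Icc_subset_Icc le_rfl hln hi)

namespace IsArrangement

variable {n : ℕ} {a c : ℕ → ℝ}

theorem exists_eq_apply (hc : IsArrangement n a c) {k : ℕ} (hk : k ∈ Set.Icc 1 n) :
    ∃ i ∈ Set.Icc 1 n, c k = a i := by
  obtain ⟨σ, hσ, hca⟩ := hc
  exact ⟨σ k, hσ.mapsTo hk, hca k hk⟩

theorem exists_apply_eq (hc : IsArrangement n a c) {i : ℕ} (hi : i ∈ Set.Icc 1 n) :
    ∃ k ∈ Set.Icc 1 n, c k = a i := by
  obtain ⟨σ, hσ, hca⟩ := hc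
  obtain ⟨k, hk, rfl⟩ := hσ.surjOn hi
  exact ⟨k, hk, hca k hk⟩

theorem swapSeq (hc : IsArrangement n a c) {i j : ℕ} (hi : i ∈ Set.Icc 1 n)
    (hj : j ∈ Set.Icc 1 n) : IsArrangement n a (swapSeq c i j) := by
  obtain ⟨σ, hσ, hca⟩ := hc
  have hswap := Equiv.bijOn_swap hi hj
  exact ⟨σ ∘ Equiv.swap i j, hσ.comp hswap, fun k hk => hca _ (hswap.mapsTo hk)⟩

end IsArrangement

theorem sum_sum_sub_sq_lt_of_shift {α : Type*} [LinearOrder α] {I : Finset α} {s t : α → ℝ}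
    {j k₀ l₀ : α} {d : ℝ} (hd : d < 0)
    (hs : ∀ k ∈ I, ∀ l ∈ I, k < j → j ≤ l → s k ≤ s l)
    (hlt : ∀ k ∈ I, k < j → t k = s k + d) (hge : ∀ k ∈ I, j ≤ k → t k = s k)
    (hk₀ : k₀ ∈ I) (hk₀j : k₀ < j) (hl₀ : l₀ ∈ I) (hl₀j : j ≤ l₀) :
    ∑ k ∈ I, ∑ l ∈ I, (s k - s l) ^ 2 < ∑ k ∈ I, ∑ l ∈ I, (t k - t l) ^ 2 := by
  have hstraddle : ∀ k ∈ I, ∀ l ∈ I, k < j → j ≤ l →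
      (s k - s l) ^ 2 < (t k - t l) ^ 2 ∧ (s l - s k) ^ 2 < (t l - t k) ^ 2 := by
    intro k hk l hl hkj hjl
    have := hs k hk l hl hkj hjl
    rw [hlt k hk hkj, hge l hl hjl]
    constructor <;> nlinarith
  have hle : ∀ k ∈ I, ∀ l ∈ I, (s k - s l) ^ 2 ≤ (t k - t l) ^ 2 := by
    intro k hk l hl
    rcases lt_or_ge k j with hkj | hjk <;> rcases lt_or_ge l j with hlj | hjl
    · rw [hlt k hk hkj, hlt l hl hlj, add_sub_add_right_eq_sub]
    · exact (hstraddle k hk l hl hkj hjl).1.le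
    · exact (hstraddle l hl k hk hlj hjk).2.le
    · rw [hge k hk hjk, hge l hl hjl]
  exact sum_lt_sum (fun k hk => sum_le_sum fun l hl => hle k hk l hl)
    ⟨k₀, hk₀, sum_lt_sum (fun l hl => hle k₀ hk₀ l hl)
      ⟨l₀, hl₀, (hstraddle k₀ hk₀ l₀ hl₀ hk₀j hl₀j).1⟩⟩

/-- Proposition 1: in an optimal arrangement the smallest element comes first. -/
theorem optimal_first_is_smallest (n : ℕ) (hn : 2 ≤ n) (a : ℕ → ℝ)
    (ha1 : 0 < a 1) (ha : ∀ i j, 1 ≤ i → i < j → j ≤ n → a i < a j)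
    (c : ℕ → ℝ) (hc : IsArrangement n a c)
    (hopt : ∀ c'', IsArrangement n a c'' → varPS n c'' ≤ varPS n c) :
    c 1 = a 1 := by
  by_contra hne
  have h1 : 1 ∈ Set.Icc 1 n := ⟨le_rfl, by omega⟩
  obtain ⟨i, ⟨hi1, hin⟩, hci⟩ := hc.exists_eq_apply h1
  obtain ⟨j, hj, hcj⟩ := hc.exists_apply_eq h1
  have hij : 1 < i := lt_of_le_of_ne hi1 (by rintro rfl; exact hne hci)
  have hj1 : 1 < j := lt_of_le_of_ne hj.1 (by rintro rfl; exact hne hcj)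
  have hc_nonneg : ∀ k ∈ Icc 1 n, 0 ≤ c k := fun k hk => by
    obtain ⟨m, ⟨hm1, hmn⟩, hcm⟩ := hc.exists_eq_apply (by simpa using hk)
    rcases hm1.eq_or_lt with rfl | hm
    · linarith
    · linarith [ha 1 m le_rfl hm hmn]
  have hd : c j - c 1 < 0 := by
    rw [hcj, hci]
    linarith [ha 1 i le_rfl hij hin]
  refine (hopt _ (hc.swapSeq h1 hj)).not_gt ?_
  rw [varPS_eq_sum_sum_sub_sq, varPS_eq_sum_sum_sub_sq]
  gcongr ?_ / _
  refine sum_sum_sub_sq_lt_of_shift (I := Icc 1 n) (k₀ := 1) (l₀ := j) hd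
    (fun k _ l hl hkj hjl => ?_) (fun k hk hkj => ?_) (fun k hk hjk => ?_)
    (by simp; omega) hj1 (by simpa using hj) le_rfl
  · exact partSum_le_partSum hc_nonneg (by omega) (mem_Icc.mp hl).2
  · exact partSum_swapSeq_of_lt c (mem_Icc.mpr ⟨le_rfl, (mem_Icc.mp hk).1⟩) hkj
  · exact partSum_swapSeq_of_le c le_rfl hj1.le hjk
end

section
/- (Proposition 3) Suppose c is an optimal arrangement of A and c_k = a_n with 1 < k < n. Then: (1) for all i, j with 1 ≤ i < j ≤ k, μ_{ij}(S) < S̄; and (2) for all i, j with k ≤ i < j ≤ n, μ_{ij}(S) > S̄. -/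
open Finset

lemma swap_mem_Icc {p n u : ℕ} (hp1 : 1 ≤ p) (hpn : p + 1 ≤ n) (hu : u ∈ Set.Icc 1 n) :
    Equiv.swap p (p+1) u ∈ Set.Icc 1 n := by
  simp only [Set.mem_Icc] at hu ⊢
  rcases eq_or_ne u p with rfl | h1
  · rw [Equiv.swap_apply_left]; omega
  rcases eq_or_ne u (p+1) with rfl | h2
  · rw [Equiv.swap_apply_right]; omega
  · rw [Equiv.swap_apply_of_ne_of_ne h1 h2]; omega

lemma isArrangement_swap (n : ℕ) (a c : ℕ → ℝ) (hc : IsArrangement n a c)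
    (p : ℕ) (hp1 : 1 ≤ p) (hpn : p + 1 ≤ n) :
    IsArrangement n a (swapSeq c p (p+1)) := by
  obtain ⟨σ, hbij, hσ⟩ := hc
  refine ⟨σ ∘ (Equiv.swap p (p+1)), ?_, ?_⟩
  · have hsw : Set.BijOn (Equiv.swap p (p+1)) (Set.Icc 1 n) (Set.Icc 1 n) := by
      refine ⟨fun u hu => swap_mem_Icc hp1 hpn hu, (Equiv.injective _).injOn, ?_⟩
      intro y hy
      exact ⟨Equiv.swap p (p+1) y, swap_mem_Icc hp1 hpn hy, Equiv.swap_apply_self _ _ _⟩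
    exact hbij.comp hsw
  · intro u hu
    exact hσ _ (swap_mem_Icc hp1 hpn hu)

lemma partSum_swap_adj (c : ℕ → ℝ) (p : ℕ) (hp : 1 ≤ p) (u : ℕ) :
    partSum (swapSeq c p (p+1)) u
      = partSum c u + (if u = p then c (p+1) - c p else 0) := by
  unfold partSum swapSeq
  rcases lt_trichotomy u p with h | rfl | h
  · rw [if_neg (by omega), add_zero]
    refine Finset.sum_congr rfl ?_
    intro i hi
    simp only [Finset.mem_Icc] at hi
    rw [Equiv.swap_apply_of_ne_of_ne (by omega) (by omega)]
  · rw [if_pos rfl]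
    obtain ⟨q, rfl⟩ : ∃ q, u = q + 1 := ⟨u - 1, by omega⟩
    rw [Finset.sum_Icc_succ_top (by omega), Finset.sum_Icc_succ_top (by omega),
      Equiv.swap_apply_left]
    have h2 : ∀ i ∈ Finset.Icc 1 q, c (Equiv.swap (q+1) (q+1+1) i) = c i := by
      intro i hi; simp only [Finset.mem_Icc] at hi
      rw [Equiv.swap_apply_of_ne_of_ne (by omega) (by omega)]
    rw [Finset.sum_congr rfl h2]
    ring
  · rw [if_neg (by omega), add_zero]
    refine Finset.sum_equiv (Equiv.swap p (p+1)) ?_ ?_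
    · intro i
      simp only [Finset.mem_Icc]
      rcases eq_or_ne i p with rfl | h1
      · rw [Equiv.swap_apply_left]; omega
      rcases eq_or_ne i (p+1) with rfl | h2
      · rw [Equiv.swap_apply_right]; omega
      · rw [Equiv.swap_apply_of_ne_of_ne h1 h2]
    · intro i _; rfl

lemma varPS_eq_moments (n : ℕ) (hn : 0 < n) (c : ℕ → ℝ) :
    varPS n c = (1/(n:ℝ)) * (∑ k ∈ Icc 1 n, (partSum c k)^2) - (meanPS n c)^2 := by
  have hn0 : ((n:ℝ)) ≠ 0 := Nat.cast_ne_zero.mpr hn.ne'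
  have hM : ∑ k ∈ Icc 1 n, partSum c k = (n:ℝ) * meanPS n c := by
    unfold meanPS; field_simp
  unfold varPS
  have hexp : ∀ k ∈ Icc 1 n, (partSum c k - meanPS n c)^2
      = (partSum c k)^2 - 2*(meanPS n c)*(partSum c k) + (meanPS n c)^2 := by
    intro k _; ring
  rw [Finset.sum_congr rfl hexp, Finset.sum_add_distrib, Finset.sum_sub_distrib,
    ← Finset.mul_sum, hM, Finset.sum_const, Nat.card_Icc, nsmul_eq_mul]
  have hcard : ((n + 1 - 1 : ℕ) : ℝ) = (n : ℝ) := by norm_num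
  rw [hcard]
  field_simp
  ring

lemma sum_swap_eq (n p : ℕ) (c : ℕ → ℝ) (hp : 1 ≤ p) (hpn : p + 1 ≤ n) :
    ∑ u ∈ Icc 1 n, partSum (swapSeq c p (p+1)) u
      = (∑ u ∈ Icc 1 n, partSum c u) + (c (p+1) - c p) := by
  rw [Finset.sum_congr rfl (fun u _ => partSum_swap_adj c p hp u), Finset.sum_add_distrib,
    Finset.sum_ite_eq' (Icc 1 n) p (fun _ => c (p+1) - c p),
    if_pos (by simp only [mem_Icc]; omega)]

lemma sum_sq_swap_eq (n p : ℕ) (c : ℕ → ℝ) (hp : 1 ≤ p) (hpn : p + 1 ≤ n) :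
    ∑ u ∈ Icc 1 n, (partSum (swapSeq c p (p+1)) u)^2
      = (∑ u ∈ Icc 1 n, (partSum c u)^2)
        + (2*(c (p+1) - c p)*(partSum c p) + (c (p+1) - c p)^2) := by
  rw [Finset.sum_congr rfl (fun u _ => by rw [partSum_swap_adj c p hp u])]
  have hexp : ∀ u ∈ Icc 1 n,
      (partSum c u + (if u = p then c (p+1) - c p else 0))^2
      = (partSum c u)^2
        + (if u = p then 2*(c (p+1) - c p)*(partSum c u) + (c (p+1) - c p)^2 else 0) := by
    intro u _
    split <;> ring
  rw [Finset.sum_congr rfl hexp, Finset.sum_add_distrib,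
    Finset.sum_ite_eq' (Icc 1 n) p
      (fun u => 2*(c (p+1) - c p)*(partSum c u) + (c (p+1) - c p)^2),
    if_pos (by simp only [mem_Icc]; omega)]

lemma swap_sign (n : ℕ) (hn : 2 ≤ n) (a c : ℕ → ℝ) (hc : IsArrangement n a c)
    (hopt : ∀ c'', IsArrangement n a c'' → varPS n c'' ≤ varPS n c)
    (p : ℕ) (hp1 : 1 ≤ p) (hpn : p + 1 ≤ n) :
    2*(c (p+1) - c p)*(partSum c p - meanPS n c)*(n:ℝ)
      + (c (p+1) - c p)^2*((n:ℝ)-1) ≤ 0 := by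
  have hn0 : (0:ℝ) < (n:ℝ) := by positivity
  have hne : ((n:ℝ)) ≠ 0 := hn0.ne'
  set c' := swapSeq c p (p+1) with hc'
  have harr : IsArrangement n a c' := isArrangement_swap n a c hc p hp1 hpn
  have hle : varPS n c' ≤ varPS n c := hopt c' harr
  have hMe : meanPS n c' = meanPS n c + (c (p+1) - c p)/(n:ℝ) := by
    unfold meanPS
    rw [sum_swap_eq n p c hp1 hpn]
    field_simp
  have hvar : varPS n c' - varPS n c
      = (2*(c (p+1) - c p)*(partSum c p - meanPS n c)*(n:ℝ)
          + (c (p+1) - c p)^2*((n:ℝ)-1)) / (n:ℝ)^2 := by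
    rw [varPS_eq_moments n (by omega) c', varPS_eq_moments n (by omega) c,
      sum_sq_swap_eq n p c hp1 hpn, hMe]
    field_simp
    ring
  have hdiv : (2*(c (p+1) - c p)*(partSum c p - meanPS n c)*(n:ℝ)
      + (c (p+1) - c p)^2*((n:ℝ)-1)) / (n:ℝ)^2 ≤ 0 := by
    rw [← hvar]; linarith
  rcases div_nonpos_iff.mp hdiv with ⟨h1, h2⟩ | ⟨h1, h2⟩
  · nlinarith
  · exact h1

lemma partSum_strictMono (n : ℕ) (c : ℕ → ℝ) (hpos : ∀ u, 1 ≤ u → u ≤ n → 0 < c u)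
    {u v : ℕ} (huv : u < v) (hv : v ≤ n) : partSum c u < partSum c v := by
  induction v with
  | zero => omega
  | succ w ih =>
    have hsucc : partSum c (w+1) = partSum c w + c (w+1) := by
      unfold partSum; rw [Finset.sum_Icc_succ_top (by omega)]
    have hcw : 0 < c (w+1) := hpos _ (by omega) hv
    rcases Nat.lt_or_ge u w with h | h
    · have := ih h (by omega); linarith
    · have huw : u = w := by omega
      subst huw; linarith


/-- Proposition 3: partial means on either side of the position of the
largest element, for an optimal arrangement. -/
theorem optimal_partMean_sides (n : ℕ) (hn : 2 ≤ n) (a : ℕ → ℝ)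
    (ha1 : 0 < a 1) (ha : ∀ i j, 1 ≤ i → i < j → j ≤ n → a i < a j)
    (c : ℕ → ℝ) (hc : IsArrangement n a c)
    (hopt : ∀ c'', IsArrangement n a c'' → varPS n c'' ≤ varPS n c)
    (k : ℕ) (hk1 : 1 < k) (hkn : k < n) (hck : c k = a n) :
    (∀ i j, 1 ≤ i → i < j → j ≤ k → partMean c i j < meanPS n c) ∧
    (∀ i j, k ≤ i → i < j → j ≤ n → meanPS n c < partMean c i j) := by
  obtain ⟨σ, hbij, hσ⟩ := hc
  have hapos : ∀ m, 1 ≤ m → m ≤ n → 0 < a m := by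
    intro m h1 h2
    rcases eq_or_lt_of_le h1 with rfl | h
    · exact ha1
    · exact lt_trans ha1 (ha 1 m le_rfl h h2)
  have hpos : ∀ u, 1 ≤ u → u ≤ n → 0 < c u := by
    intro u h1 h2
    have hm : σ u ∈ Set.Icc 1 n := hbij.1 ⟨h1, h2⟩
    rw [hσ u ⟨h1, h2⟩]
    exact hapos _ hm.1 hm.2
  have hσk : σ k = n := by
    have h1 : c k = a (σ k) := hσ k ⟨by omega, by omega⟩
    have h2 : σ k ∈ Set.Icc 1 n := hbij.1 ⟨by omega, by omega⟩
    by_contra h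
    have hlt : σ k < n := lt_of_le_of_ne h2.2 h
    have := ha (σ k) n h2.1 hlt le_rfl
    rw [← h1, hck] at this
    exact lt_irrefl _ this
  have hcmax : ∀ u, 1 ≤ u → u ≤ n → u ≠ k → c u < c k := by
    intro u h1 h2 hne
    have hm : σ u ∈ Set.Icc 1 n := hbij.1 ⟨h1, h2⟩
    have hne' : σ u ≠ n := by
      intro h
      exact hne (hbij.2.1 ⟨h1, h2⟩ ⟨by omega, by omega⟩ (by rw [h, hσk]))
    have hlt : σ u < n := lt_of_le_of_ne hm.2 hne'
    rw [hσ u ⟨h1, h2⟩, hck]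
    exact ha (σ u) n hm.1 hlt le_rfl
  have hn0 : (0:ℝ) < (n:ℝ) := by positivity
  have hnR : (2:ℝ) ≤ (n:ℝ) := by exact_mod_cast hn
  have hA : partSum c (k-1) < meanPS n c := by
    have hkk : (k-1) + 1 = k := by omega
    have hs := swap_sign n hn a c ⟨σ, hbij, hσ⟩ hopt (k-1) (by omega) (by omega)
    rw [hkk] at hs
    have hδ : 0 < c k - c (k-1) := by
      have := hcmax (k-1) (by omega) (by omega) (by omega)
      linarith
    nlinarith [mul_pos hδ hδ, mul_pos hδ hn0]
  have hB : meanPS n c < partSum c k := by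
    have hs := swap_sign n hn a c ⟨σ, hbij, hσ⟩ hopt k (by omega) (by omega)
    have hδ : 0 < c k - c (k+1) := by
      have := hcmax (k+1) (by omega) (by omega) (by omega)
      linarith
    nlinarith [mul_pos hδ hδ, mul_pos hδ hn0]
  constructor
  · intro i j hi hij hjk
    have hji : (0:ℝ) < (j:ℝ) - (i:ℝ) := by
      have : (i:ℝ) < j := by exact_mod_cast hij
      linarith
    have hterm : ∀ t ∈ Icc i (j-1), partSum c t < meanPS n c := by
      intro t ht
      simp only [mem_Icc] at ht
      rcases Nat.lt_or_ge t (k-1) with h | h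
      · have := partSum_strictMono n c hpos h (by omega)
        linarith
      · have ht' : t = k - 1 := by omega
        rw [ht']; exact hA
    have hne : (Icc i (j-1)).Nonempty := ⟨i, by simp only [mem_Icc]; omega⟩
    have hsum : (∑ t ∈ Icc i (j-1), partSum c t) < ((j:ℝ) - (i:ℝ)) * meanPS n c := by
      have h1 := Finset.sum_lt_sum_of_nonempty hne hterm
      rw [Finset.sum_const, Nat.card_Icc, nsmul_eq_mul] at h1
      have hcast : ((j - 1 + 1 - i : ℕ) : ℝ) = (j:ℝ) - (i:ℝ) := by
        have he : j - 1 + 1 - i = j - i := by omega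
        rw [he, Nat.cast_sub (le_of_lt hij)]
      rw [hcast] at h1
      exact h1
    unfold partMean
    calc (1 / ((j:ℝ) - (i:ℝ))) * ∑ t ∈ Icc i (j-1), partSum c t
        < (1 / ((j:ℝ) - (i:ℝ))) * (((j:ℝ) - (i:ℝ)) * meanPS n c) :=
          mul_lt_mul_of_pos_left hsum (by positivity)
      _ = meanPS n c := by field_simp
  · intro i j hi hij hjn
    have hji : (0:ℝ) < (j:ℝ) - (i:ℝ) := by
      have : (i:ℝ) < j := by exact_mod_cast hij
      linarith
    have hterm : ∀ t ∈ Icc i (j-1), meanPS n c < partSum c t := by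
      intro t ht
      simp only [mem_Icc] at ht
      rcases Nat.lt_or_ge k t with h | h
      · have := partSum_strictMono n c hpos h (by omega)
        linarith
      · have ht' : t = k := by omega
        rw [ht']; exact hB
    have hne : (Icc i (j-1)).Nonempty := ⟨i, by simp only [mem_Icc]; omega⟩
    have hsum : ((j:ℝ) - (i:ℝ)) * meanPS n c < ∑ t ∈ Icc i (j-1), partSum c t := by
      have h1 := Finset.sum_lt_sum_of_nonempty hne hterm
      rw [Finset.sum_const, Nat.card_Icc, nsmul_eq_mul] at h1
      have hcast : ((j - 1 + 1 - i : ℕ) : ℝ) = (j:ℝ) - (i:ℝ) := by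
        have he : j - 1 + 1 - i = j - i := by omega
        rw [he, Nat.cast_sub (le_of_lt hij)]
      rw [hcast] at h1
      exact h1
    unfold partMean
    calc meanPS n c
        = (1 / ((j:ℝ) - (i:ℝ))) * (((j:ℝ) - (i:ℝ)) * meanPS n c) := by field_simp
      _ < (1 / ((j:ℝ) - (i:ℝ))) * ∑ t ∈ Icc i (j-1), partSum c t :=
          mul_lt_mul_of_pos_left hsum (by positivity)
end

section
/- (Lemma 1) For any sequence c = (c_1, c_2, c_3, …, c_{n−1}, c_n) of real numbers and its dual sequence c^d = (c_1, c_n, c_{n−1}, …, c_3, c_2) (keeping the first entry and reversing the remaining entries), the variances of the partial sums coincide: f(c) = f(c^d). -/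
open Finset

lemma partSum_dual (n : ℕ) (hn : 1 ≤ n) (c : ℕ → ℝ) (k : ℕ) (hk1 : 1 ≤ k) (hkn : k ≤ n) :
    partSum (dualSeq n c) k = partSum c 1 + partSum c n - partSum c (n + 1 - k) := by
  have h1 : partSum (dualSeq n c) k = c 1 + ∑ i ∈ Finset.Icc 2 k, c (n + 2 - i) := by
    unfold partSum
    have : Finset.Icc 1 k = insert 1 (Finset.Icc 2 k) := by
      ext x; simp [Finset.mem_Icc, Finset.mem_insert]; omega
    rw [this, Finset.sum_insert (by simp)]
    congr 1
    · apply Finset.sum_congr rfl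
      intro i hi
      simp only [Finset.mem_Icc] at hi
      simp [dualSeq, hi.1]
  have h2 : ∑ i ∈ Finset.Icc 2 k, c (n + 2 - i) = ∑ j ∈ Finset.Icc (n + 2 - k) n, c j := by
    apply Finset.sum_nbij' (fun i => n + 2 - i) (fun j => n + 2 - j)
    · intro i hi; simp only [Finset.mem_Icc] at *; omega
    · intro j hj; simp only [Finset.mem_Icc] at *; omega
    · intro i hi; simp only [Finset.mem_Icc] at hi; omega
    · intro j hj; simp only [Finset.mem_Icc] at hj; omega
    · intro i hi; rfl
  have h3 : partSum c (n + 1 - k) + ∑ j ∈ Finset.Icc (n + 2 - k) n, c j = partSum c n := by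
    unfold partSum
    have e1 : Finset.Icc 1 (n + 1 - k) = Finset.Ioc 0 (n + 1 - k) := by
      ext x; simp [Finset.mem_Icc, Finset.mem_Ioc]; omega
    have e2 : Finset.Icc (n + 2 - k) n = Finset.Ioc (n + 1 - k) n := by
      ext x; simp [Finset.mem_Icc, Finset.mem_Ioc]; omega
    have e3 : Finset.Icc 1 n = Finset.Ioc 0 n := by
      ext x; simp [Finset.mem_Icc, Finset.mem_Ioc]; omega
    rw [e1, e2, e3, Finset.sum_Ioc_consecutive _ (by omega) (by omega)]
  have hS1 : partSum c 1 = c 1 := by simp [partSum]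
  rw [h1, h2, hS1]
  linarith [h3]

lemma sum_reindex (n : ℕ) (g : ℕ → ℝ) :
    ∑ k ∈ Finset.Icc 1 n, g (n + 1 - k) = ∑ k ∈ Finset.Icc 1 n, g k := by
  apply Finset.sum_nbij' (fun k => n + 1 - k) (fun k => n + 1 - k)
  · intro i hi; simp only [Finset.mem_Icc] at *; omega
  · intro j hj; simp only [Finset.mem_Icc] at *; omega
  · intro i hi; simp only [Finset.mem_Icc] at hi; omega
  · intro j hj; simp only [Finset.mem_Icc] at hj; omega
  · intro i hi; rfl

lemma meanPS_dual (n : ℕ) (hn : 1 ≤ n) (c : ℕ → ℝ) :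
    meanPS n (dualSeq n c) = partSum c 1 + partSum c n - meanPS n c := by
  unfold meanPS
  rw [Finset.sum_congr rfl (fun k hk => by
    simp only [Finset.mem_Icc] at hk
    exact partSum_dual n hn c k hk.1 hk.2)]
  rw [Finset.sum_sub_distrib, Finset.sum_const, Nat.card_Icc]
  rw [sum_reindex n (partSum c)]
  have hn' : (n : ℝ) ≠ 0 := by positivity
  simp only [Nat.add_sub_cancel]
  field_simp
  ring

/-- Lemma 1: the variance of the partial sums of a sequence and of its
dual sequence coincide. -/
theorem varPS_dualSeq (n : ℕ) (hn : 1 ≤ n) (c : ℕ → ℝ) :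
    varPS n c = varPS n (dualSeq n c) := by
  unfold varPS
  congr 1
  have key : ∀ k ∈ Finset.Icc 1 n,
      (partSum (dualSeq n c) k - meanPS n (dualSeq n c)) ^ 2
        = (fun j => (partSum c j - meanPS n c) ^ 2) (n + 1 - k) := by
    intro k hk
    simp only [Finset.mem_Icc] at hk
    rw [partSum_dual n hn c k hk.1 hk.2, meanPS_dual n hn c]
    ring
  rw [Finset.sum_congr rfl key, sum_reindex n (fun j => (partSum c j - meanPS n c) ^ 2)]
end

section
/- (Theorem 1) Let u = ⌈n/2⌉ and I = { k : 2 ≤ k ≤ u and c_k < c_{n+2−k} }. Suppose the entries of c are positive and pairwise distinct, I is nonempty, and there is at least one k with 2 ≤ k ≤ u and c_k > c_{n+2−k} (so neither of the two conditions 'c_k < c_{n+2−k} for all 2 ≤ k ≤ u' and 'c_k > c_{n+2−k} for all 2 ≤ k ≤ u' holds). Let c^I be the sum-'n+2' transform of c, obtained by swapping c_k and c_{n+2−k} for every k ∈ I. Then f(c^I) > f(c), i.e. the sum-'n+2' transform produces a better sequence. -/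
open Finset

/-- Swap `c_k` and `c_{n+2-k}` simultaneously for every `k ∈ I` (where `I ⊆ {2,…,⌈n/2⌉}`,
so the swapped pairs are pairwise disjoint). -/
noncomputable def sumSwapN2 (n : ℕ) (I : Finset ℕ) (c : ℕ → ℝ) : ℕ → ℝ :=
  fun k => if k ∈ I ∨ n + 2 - k ∈ I then c (n + 2 - k) else c k

/-!
Write `s`, `s'` for the partial sums of `c` and of its transform, and `δ_k = c_{n+2-k} - c_k`.
Swapping the pair `(k, n+2-k)` adds `δ_k` to the partial sums on the window `J_k = [k, n+1-k]`,
so `s' - s = ∑_{m ∈ I} δ_m 𝟙_{J_m}` is symmetric under the reflection `j ↦ n+1-j`. On the other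
hand `s' + s + ∑_{k ∉ I} δ_k 𝟙_{J_k}` is the sum of the partial sums of `c` and of its dual, which
is antisymmetric under the same reflection. Symmetric and antisymmetric sequences are uncorrelated,
so from `n² f = Cov(s, s)` we get
`n² (f(c^I) - f(c)) = Cov(s' + s, s' - s) = -∑_{k ∉ I, m ∈ I} δ_k δ_m Cov(𝟙_{J_k}, 𝟙_{J_m})`.
The windows are nested, nonempty and miss position `1`, so every covariance is positive, while
`δ_k ≤ 0 < δ_m`, and the hypothesis on the complement of `I` makes one term strictly positive.
-/
-- `n²` times the covariance of `x` and `y` over the indices `1..n`, so that no division occurs.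
noncomputable def covPS (n : ℕ) : LinearMap.BilinForm ℝ (ℕ → ℝ) :=
  LinearMap.mk₂ ℝ
    (fun x y => n * ∑ k ∈ Icc 1 n, x k * y k - (∑ k ∈ Icc 1 n, x k) * ∑ k ∈ Icc 1 n, y k)
    (fun x x' y => by simp only [Pi.add_apply, add_mul, sum_add_distrib]; ring)
    (fun a x y => by simp only [Pi.smul_apply, smul_eq_mul, mul_assoc, ← mul_sum]; ring)
    (fun x y y' => by simp only [Pi.add_apply, mul_add, sum_add_distrib]; ring)
    (fun a x y => by simp only [Pi.smul_apply, smul_eq_mul, mul_left_comm _ a, ← mul_sum]; ring)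

theorem covPS_apply (n : ℕ) (x y : ℕ → ℝ) :
    covPS n x y = n * ∑ k ∈ Icc 1 n, x k * y k - (∑ k ∈ Icc 1 n, x k) * ∑ k ∈ Icc 1 n, y k :=
  rfl

theorem covPS_comm (n : ℕ) (x y : ℕ → ℝ) : covPS n x y = covPS n y x := by
  simp only [covPS_apply, mul_comm (x _)]; ring

theorem covPS_self_sub_covPS_self (n : ℕ) (x y : ℕ → ℝ) :
    covPS n x x - covPS n y y = covPS n (x + y) (x - y) := by
  simp only [map_add, map_sub, LinearMap.add_apply, covPS_comm n y x]; ring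

theorem sq_mul_varPS (n : ℕ) (c : ℕ → ℝ) :
    (n : ℝ) ^ 2 * varPS n c = covPS n (partSum c) (partSum c) := by
  rcases Nat.eq_zero_or_pos n with rfl | hn
  · simp [varPS, covPS_apply]
  have hn' : (n : ℝ) ≠ 0 := by positivity
  simp only [varPS, meanPS, covPS_apply, sub_sq, sum_add_distrib, sum_sub_distrib, sum_const,
    Nat.card_Icc, add_tsub_cancel_right, nsmul_eq_mul, ← sum_mul, ← mul_sum]
  field_simp
  ring

theorem sum_Icc_reflect {M : Type*} [AddCommMonoid M] (n : ℕ) (f : ℕ → M) :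
    ∑ k ∈ Icc 1 n, f (n + 1 - k) = ∑ k ∈ Icc 1 n, f k :=
  sum_nbij' (fun k => n + 1 - k) (fun k => n + 1 - k) (by simp; omega) (by simp; omega)
    (by simp; omega) (by simp; omega) (fun _ _ => rfl)

theorem covPS_eq_zero_of_reflect {n : ℕ} {x y : ℕ → ℝ} (C : ℝ)
    (hx : ∀ k ∈ Icc 1 n, x k + x (n + 1 - k) = C) (hy : ∀ k ∈ Icc 1 n, y (n + 1 - k) = y k) :
    covPS n x y = 0 := by
  have hxy : 2 * ∑ k ∈ Icc 1 n, x k * y k = C * ∑ k ∈ Icc 1 n, y k := by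
    rw [two_mul]
    nth_rw 2 [← sum_Icc_reflect]
    rw [← sum_add_distrib, mul_sum]
    exact sum_congr rfl fun k hk => by rw [hy k hk, ← hx k hk]; ring
  have hx' : 2 * ∑ k ∈ Icc 1 n, x k = n * C := by
    rw [two_mul]
    nth_rw 2 [← sum_Icc_reflect]
    rw [← sum_add_distrib, sum_congr rfl hx]
    simp
  rw [covPS_apply]
  linear_combination (n / 2 : ℝ) * hxy - (∑ k ∈ Icc 1 n, y k) / 2 * hx'

theorem covPS_indicator {n : ℕ} {A B : Finset ℕ} (hA : A ⊆ Icc 1 n) (hB : B ⊆ Icc 1 n) :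
    covPS n ((A : Set ℕ).indicator 1) ((B : Set ℕ).indicator 1) = n * #(A ∩ B) - #A * #B := by
  simp only [covPS_apply, ← Pi.mul_apply _ _ (_ : ℕ), ← Set.inter_indicator_one, ← coe_inter,
    sum_indicator_subset _ hA, sum_indicator_subset _ hB,
    sum_indicator_subset _ (inter_subset_left.trans hA)]
  simp

theorem covPS_indicator_pos {n : ℕ} {A B : Finset ℕ} (hBA : B ⊆ A) (hA : A ⊂ Icc 1 n)
    (hB : B.Nonempty) : 0 < covPS n ((A : Set ℕ).indicator 1) ((B : Set ℕ).indicator 1) := by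
  rw [covPS_indicator hA.subset (hBA.trans hA.subset), inter_eq_right.mpr hBA]
  have hAn : (#A : ℝ) < n := by exact_mod_cast (by simpa using card_lt_card hA : #A < n)
  have hB0 : (0 : ℝ) < #B := by exact_mod_cast hB.card_pos
  nlinarith

-- Moving one unit of mass from position `n + 2 - m` to position `m` adds this to the partial sums.
noncomputable def pairIndicator (n m : ℕ) : ℕ → ℝ := (Icc m (n + 1 - m) : Set ℕ).indicator 1

section SumSwap

variable {n : ℕ} {c : ℕ → ℝ}

theorem sumSwapN2_apply {I : Finset ℕ} (hI : ∀ m ∈ I, 2 ≤ m ∧ 2 * m ≤ n + 1) (i : ℕ) :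
    sumSwapN2 n I c i = c i + ∑ m ∈ I, (c (n + 2 - m) - c m) *
      ((if m = i then 1 else 0) - if n + 2 - m = i then 1 else 0) := by
  have hrefl : ∀ m ∈ I, (n + 2 - m = i) ↔ (n + 2 - i = m) := fun m hm => by
    have := hI m hm; omega
  simp only [mul_sub, mul_ite, mul_one, mul_zero, sum_sub_distrib, sum_ite_eq']
  rw [sum_congr rfl fun m hm => if_congr (hrefl m hm) rfl rfl, sum_ite_eq]
  unfold sumSwapN2
  by_cases hi : i ∈ I
  · have hi' : n + 2 - i ∉ I := fun h => by have := hI i hi; have := hI _ h; omega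
    simp [hi, hi']
  by_cases hi' : n + 2 - i ∈ I
  · have : n + 2 - (n + 2 - i) = i := by have := hI _ hi'; omega
    simp [hi, hi', this]
  · simp [hi, hi']

theorem partSum_sumSwapN2 {I : Finset ℕ} (hI : ∀ m ∈ I, 2 ≤ m ∧ 2 * m ≤ n + 1) (j : ℕ) :
    partSum (sumSwapN2 n I c) j = partSum c j +
      ∑ m ∈ I, (c (n + 2 - m) - c m) * pairIndicator n m j := by
  simp only [partSum, sumSwapN2_apply hI, sum_add_distrib, add_right_inj]
  rw [sum_comm]
  refine sum_congr rfl fun m hm => ?_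
  have := hI m hm
  rw [← mul_sum, sum_sub_distrib, sum_ite_eq, sum_ite_eq]
  simp only [pairIndicator, Set.indicator_apply, coe_Icc, Set.mem_Icc, mem_Icc, Pi.one_apply]
  split_ifs <;> first | omega | norm_num

theorem partSum_dualSeq {j : ℕ} (hj : j ≤ n) :
    partSum (dualSeq n c) j = partSum c j + ∑ m ∈ Icc 2 ((n + 1) / 2),
      (c (n + 2 - m) - c m) * pairIndicator n m j := by
  rw [← partSum_sumSwapN2 fun m hm => by rw [mem_Icc] at hm; omega]
  refine sum_congr rfl fun k hk => ?_
  rw [mem_Icc] at hk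
  simp only [dualSeq, sumSwapN2, mem_Icc]
  split_ifs <;> first | rfl | omega | (congr 1; omega)

theorem partSum_add_partSum_dualSeq {j : ℕ} (hj : j ≤ n) :
    partSum c j + partSum (dualSeq n c) (n + 1 - j) = c 1 + partSum c n := by
  have hdual : ∑ i ∈ Ioc 1 (n + 1 - j), dualSeq n c i = ∑ i ∈ Ioc j n, c i :=
    sum_nbij' (fun i => n + 2 - i) (fun i => n + 2 - i) (by simp; omega) (by simp; omega)
      (by simp; omega) (by simp; omega) fun i hi => by
        rw [mem_Ioc] at hi; simp [dualSeq, show 2 ≤ i by omega]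
  have hIoc : ∀ k, Icc 1 k = Ioc 0 k := fun k => Icc_add_one_left_eq_Ioc 0 k
  simp only [partSum, hIoc]
  rw [← sum_Ioc_consecutive _ (Nat.zero_le j) hj,
    ← sum_Ioc_consecutive _ zero_le_one (show 1 ≤ n + 1 - j by omega), hdual]
  have hone : ∑ i ∈ Ioc 0 1, dualSeq n c i = c 1 := by simp [dualSeq]
  rw [hone]
  ring

theorem pairIndicator_reflect (m : ℕ) {j : ℕ} (hj : j ≤ n + 1) :
    pairIndicator n m (n + 1 - j) = pairIndicator n m j := by
  simp only [pairIndicator, Set.indicator_apply, coe_Icc, Set.mem_Icc]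
  congr 1
  exact propext (by omega)

theorem covPS_pairIndicator_pos {k m : ℕ} (hk : k ∈ Icc 2 ((n + 1) / 2))
    (hm : m ∈ Icc 2 ((n + 1) / 2)) : 0 < covPS n (pairIndicator n k) (pairIndicator n m) := by
  wlog hkm : k ≤ m generalizing k m
  · rw [covPS_comm]; exact this hm hk (by omega)
  rw [mem_Icc] at hk hm
  refine covPS_indicator_pos (Icc_subset_Icc hkm (by omega)) ?_ (nonempty_Icc.mpr (by omega))
  refine Finset.ssubset_iff_subset_ne.mpr ⟨Icc_subset_Icc (by omega) (by omega), fun h => ?_⟩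
  have : 1 ∈ Icc k (n + 1 - k) := h ▸ mem_Icc.mpr ⟨le_rfl, by omega⟩
  exact absurd (mem_Icc.mp this).1 (by omega)

theorem sq_mul_varPS_sumSwapN2_sub {I : Finset ℕ} (hI : I ⊆ Icc 2 ((n + 1) / 2)) :
    (n : ℝ) ^ 2 * varPS n (sumSwapN2 n I c) - (n : ℝ) ^ 2 * varPS n c =
      ∑ k ∈ Icc 2 ((n + 1) / 2) \ I, ∑ m ∈ I, (c k - c (n + 2 - k)) * (c (n + 2 - m) - c m) *
        covPS n (pairIndicator n k) (pairIndicator n m) := by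
  have hI' : ∀ m ∈ I, 2 ≤ m ∧ 2 * m ≤ n + 1 := fun m hm => by
    have := mem_Icc.mp (hI hm); omega
  set s := partSum c
  set s' := partSum (sumSwapN2 n I c)
  set z : ℕ → ℝ := ∑ m ∈ I, (c (n + 2 - m) - c m) • pairIndicator n m
  set w : ℕ → ℝ := ∑ k ∈ Icc 2 ((n + 1) / 2) \ I, (c (n + 2 - k) - c k) • pairIndicator n k
  have hz : s' - s = z := funext fun j => by
    simp [s, s', z, partSum_sumSwapN2 hI', Finset.sum_apply]
  have hy : ∀ j ∈ Icc 1 n, (s' + s + w) j = s j + partSum (dualSeq n c) j := fun j hj => by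
    simp only [s, s', w, Pi.add_apply, Finset.sum_apply, Pi.smul_apply, smul_eq_mul,
      partSum_sumSwapN2 hI', partSum_dualSeq (mem_Icc.mp hj).2, ← sum_sdiff hI]
    ring
  have hanti : ∀ j ∈ Icc 1 n, (s' + s + w) j + (s' + s + w) (n + 1 - j) = 2 * (c 1 + s n) :=
    fun j hj => by
      have hj' : n + 1 - j ∈ Icc 1 n := by simp at hj ⊢; omega
      rw [hy j hj, hy _ hj']
      have h1 := partSum_add_partSum_dualSeq (c := c) (mem_Icc.mp hj).2
      have h2 := partSum_add_partSum_dualSeq (c := c) (mem_Icc.mp hj').2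
      rw [show n + 1 - (n + 1 - j) = j by simp at hj; omega] at h2
      linarith
  have hsymm : ∀ j ∈ Icc 1 n, z (n + 1 - j) = z j := fun j hj => by
    simp only [z, Finset.sum_apply, Pi.smul_apply,
      pairIndicator_reflect _ (show j ≤ n + 1 by simp at hj; omega)]
  rw [sq_mul_varPS, sq_mul_varPS, covPS_self_sub_covPS_self, hz,
    show s' + s = s' + s + w - w by abel, map_sub, LinearMap.sub_apply,
    covPS_eq_zero_of_reflect _ hanti hsymm]
  simp only [w, z, map_sum, LinearMap.sum_apply, map_smul, LinearMap.smul_apply, smul_eq_mul,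
    mul_sum, zero_sub, ← sum_neg_distrib]
  rw [sum_comm]
  refine sum_congr rfl fun k _ => sum_congr rfl fun m _ => by ring

end SumSwap

theorem sumSwapN2_better_general (n : ℕ) (c : ℕ → ℝ)
    (hne : ((Finset.Icc 2 ((n + 1) / 2)).filter (fun k => c k < c (n + 2 - k))).Nonempty)
    (hne' : ∃ k, 2 ≤ k ∧ k ≤ (n + 1) / 2 ∧ c (n + 2 - k) < c k) :
    varPS n c <
      varPS n (sumSwapN2 n
        ((Finset.Icc 2 ((n + 1) / 2)).filter (fun k => c k < c (n + 2 - k))) c) := by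
  set I := (Icc 2 ((n + 1) / 2)).filter (fun k => c k < c (n + 2 - k))
  obtain ⟨k₀, hk₀2, hk₀u, hk₀⟩ := hne'
  have hk₀I : k₀ ∈ Icc 2 ((n + 1) / 2) \ I := by simp [I, hk₀2, hk₀u, hk₀.le]
  have hI : ∀ m ∈ I, 0 < c (n + 2 - m) - c m := fun m hm => sub_pos.mpr (mem_filter.mp hm).2
  have hK : ∀ k ∈ Icc 2 ((n + 1) / 2) \ I, 0 ≤ c k - c (n + 2 - k) := fun k hk =>
    sub_nonneg.mpr <| not_lt.mp fun h =>
      (mem_sdiff.mp hk).2 (mem_filter.mpr ⟨(mem_sdiff.mp hk).1, h⟩)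
  have hcov : ∀ k ∈ Icc 2 ((n + 1) / 2) \ I, ∀ m ∈ I,
      0 < covPS n (pairIndicator n k) (pairIndicator n m) := fun k hk m hm =>
    covPS_pairIndicator_pos (mem_sdiff.mp hk).1 (filter_subset _ _ hm)
  have hn : (0 : ℝ) < n ^ 2 := pow_pos (Nat.cast_pos.mpr (by omega)) 2
  rw [← mul_lt_mul_iff_of_pos_left hn, ← sub_pos, sq_mul_varPS_sumSwapN2_sub (filter_subset _ _)]
  refine sum_pos' (fun k hk => sum_nonneg fun m hm => ?_) ⟨k₀, hk₀I, sum_pos (fun m hm => ?_) hne⟩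
  · exact mul_nonneg (mul_nonneg (hK k hk) (hI m hm).le) (hcov k hk m hm).le
  · exact mul_pos (mul_pos (sub_pos.mpr hk₀) (hI m hm)) (hcov k₀ hk₀I m hm)

/-- Theorem 1: a sum-`n+2` transform always results in a better sequence. -/
theorem sumSwapN2_better (n : ℕ) (hn : 2 ≤ n) (c : ℕ → ℝ)
    (hpos : ∀ k, 1 ≤ k → k ≤ n → 0 < c k)
    (hdist : ∀ i j, 1 ≤ i → i ≤ n → 1 ≤ j → j ≤ n → i ≠ j → c i ≠ c j)
    (hne : ((Finset.Icc 2 ((n + 1) / 2)).filter (fun k => c k < c (n + 2 - k))).Nonempty)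
    (hne' : ∃ k, 2 ≤ k ∧ k ≤ (n + 1) / 2 ∧ c (n + 2 - k) < c k) :
    varPS n c <
      varPS n (sumSwapN2 n
        ((Finset.Icc 2 ((n + 1) / 2)).filter (fun k => c k < c (n + 2 - k))) c) :=
  sumSwapN2_better_general n c hne hne'
end
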